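/- Suppose the first partial trace of W(ρ⊗σ)W† equals the second partial trace of W(ρ⊗σ)W† for all inputs (i.e., the convolution channel equals its complementary channel). Then for any such unitary W and density operators ρ, σ, the convolution ρ ⊠ σ := Tr_2[W(ρ⊗σ)W†] satisfies S(ρ ⊠ σ) ≥ (S(ρ) + S(σ))/2. -/

import Mathlib

open Matrix Kronecker ComplexOrder

/-- Von Neumann entropy of a (Hermitian) matrix, via its eigenvalues. -/
noncomputable def vnEntropy {m : Type*} [Fintype m] [DecidableEq m]
    (ρ : Matrix m m ℂ) : ℝ :=
  if h : ρ.IsHermitian then ∑ i, Real.negMulLog (h.eigenvalues i) else 0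

/-- Partial trace over the second tensor factor. -/
noncomputable def ptr2 {A B : Type*} [Fintype A] [Fintype B]
    (ρ : Matrix (A × B) (A × B) ℂ) : Matrix A A ℂ :=
  fun a a' => ∑ b : B, ρ (a, b) (a', b)

/-- Partial trace over the first tensor factor. -/
noncomputable def ptr1 {A B : Type*} [Fintype A] [Fintype B]
    (ρ : Matrix (A × B) (A × B) ℂ) : Matrix B B ℂ :=
  fun b b' => ∑ a : A, ρ (a, b) (a, b')

/-!
For `τ = W (ρ ⊗ σ) W†`, additivity and unitary invariance give `S(ρ) + S(σ) = S(τ)`, and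
subadditivity bounds this by `S(τ_A) + S(τ_B) = 2 S(τ_A)`. Subadditivity reduces to Shannon
entropies: write `τ` in the product of the eigenbases of its marginals. Its diagonal `Q` is the
spectrum `λ` of `τ` multiplied by the doubly stochastic matrix of squared moduli of a unitary
change of basis, so `H(λ) ≤ H(Q)` by concavity of `x ↦ -x log x`; and the marginals of `Q` are
the spectra of `τ_A` and `τ_B`, so `H(Q) ≤ H(τ_A) + H(τ_B)` by the Gibbs inequality.
-/

open Real

theorem negMulLog_le_mul_neg_log_add_sub {q r : ℝ} (hq : 0 ≤ q) (hr : 0 < r) :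
    negMulLog q ≤ q * -log r + r - q := by
  rcases hq.eq_or_lt with rfl | hq
  · simpa using hr.le
  · have h := mul_le_mul_of_nonneg_left (log_le_sub_one_of_pos (div_pos hr hq)) hq.le
    rw [log_div hr.ne' hq.ne', show q * (r / q - 1) = r - q by field_simp] at h
    rw [negMulLog]
    linarith

theorem sum_negMulLog_le_sum_negMulLog_mulVec {n : Type*} [Fintype n] [DecidableEq n]
    {M : Matrix n n ℝ} (hM : M ∈ doublyStochastic ℝ n) {x : n → ℝ} (hx : ∀ i, 0 ≤ x i) :
    ∑ i, negMulLog (x i) ≤ ∑ i, negMulLog ((M *ᵥ x) i) := by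
  have jensen (i : n) : ∑ j, M i j * negMulLog (x j) ≤ negMulLog ((M *ᵥ x) i) :=
    concaveOn_negMulLog.le_map_sum (fun j _ => nonneg_of_mem_doublyStochastic hM)
      (sum_row_of_mem_doublyStochastic hM i) (fun j _ => Set.mem_Ici.mpr (hx j))
  calc ∑ j, negMulLog (x j) = ∑ i, ∑ j, M i j * negMulLog (x j) := by
        rw [Finset.sum_comm]
        simp_rw [← Finset.sum_mul, sum_col_of_mem_doublyStochastic hM, one_mul]
    _ ≤ _ := Finset.sum_le_sum fun i _ => jensen i

theorem sum_negMulLog_le_add_of_marginals {I J : Type*} [Fintype I] [Fintype J]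
    {Q : I × J → ℝ} {a : I → ℝ} {b : J → ℝ} (hQ : ∀ m, 0 ≤ Q m) (hQ1 : ∑ m, Q m = 1)
    (ha : ∀ i, ∑ j, Q (i, j) = a i) (hb : ∀ j, ∑ i, Q (i, j) = b j) :
    ∑ m, negMulLog (Q m) ≤ ∑ i, negMulLog (a i) + ∑ j, negMulLog (b j) := by
  have le_a (i : I) (j : J) : Q (i, j) ≤ a i :=
    ha i ▸ Finset.single_le_sum (fun j _ => hQ (i, j)) (Finset.mem_univ j)
  have le_b (i : I) (j : J) : Q (i, j) ≤ b j :=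
    hb j ▸ Finset.single_le_sum (fun i _ => hQ (i, j)) (Finset.mem_univ i)
  have gibbs (i : I) (j : J) : negMulLog (Q (i, j)) ≤
      Q (i, j) * -log (a i) + Q (i, j) * -log (b j) + (a i * b j - Q (i, j)) := by
    rcases (hQ (i, j)).eq_or_lt with h | h
    · rw [← h]
      simpa using mul_nonneg (h ▸ le_a i j) (h ▸ le_b i j)
    · have hai := h.trans_le (le_a i j)
      have hbj := h.trans_le (le_b i j)
      have := negMulLog_le_mul_neg_log_add_sub (hQ (i, j)) (mul_pos hai hbj)
      rw [log_mul hai.ne' hbj.ne'] at this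
      linarith
  have entropy_a : ∑ i, ∑ j, Q (i, j) * -log (a i) = ∑ i, negMulLog (a i) := by
    simp_rw [← Finset.sum_mul, ha, negMulLog, neg_mul, mul_neg]
  have entropy_b : ∑ i, ∑ j, Q (i, j) * -log (b j) = ∑ j, negMulLog (b j) := by
    rw [Finset.sum_comm]
    simp_rw [← Finset.sum_mul, hb, negMulLog, neg_mul, mul_neg]
  have mass : ∑ i, ∑ j, (a i * b j - Q (i, j)) = 0 := by
    have hsum_a : ∑ i, a i = 1 := by simp_rw [← ha, ← Fintype.sum_prod_type, hQ1]
    have hsum_b : ∑ j, b j = 1 := by simp_rw [← hb, ← Fintype.sum_prod_type_right, hQ1]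
    simp only [Finset.sum_sub_distrib, ← Finset.mul_sum, ← Finset.sum_mul, hsum_a, hsum_b]
    rw [← Fintype.sum_prod_type, hQ1, mul_one, sub_self]
  calc ∑ m, negMulLog (Q m)
      ≤ ∑ i, ∑ j, (Q (i, j) * -log (a i) + Q (i, j) * -log (b j) + (a i * b j - Q (i, j))) := by
        rw [Fintype.sum_prod_type]
        exact Finset.sum_le_sum fun i _ => Finset.sum_le_sum fun j _ => gibbs i j
    _ = ∑ i, negMulLog (a i) + ∑ j, negMulLog (b j) := by
        simp only [Finset.sum_add_distrib, entropy_a, entropy_b, mass, add_zero]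

section Spectral

variable {n : Type*} [Fintype n] [DecidableEq n]

theorem Matrix.IsHermitian.eq_mul_diagonal_mul_star {M : Matrix n n ℂ} (hM : M.IsHermitian) :
    M = (hM.eigenvectorUnitary : Matrix n n ℂ) * diagonal (RCLike.ofReal ∘ hM.eigenvalues) *
      star (hM.eigenvectorUnitary : Matrix n n ℂ) := by
  simpa only [Unitary.conjStarAlgAut_apply] using hM.spectral_theorem

theorem Matrix.IsHermitian.star_eigenvectorUnitary_mul_mul_eigenvectorUnitary
    {M : Matrix n n ℂ} (hM : M.IsHermitian) :
    star (hM.eigenvectorUnitary : Matrix n n ℂ) * M * (hM.eigenvectorUnitary : Matrix n n ℂ) =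
      diagonal (RCLike.ofReal ∘ hM.eigenvalues) := by
  simpa [Unitary.conjStarAlgAut_apply] using hM.conjStarAlgAut_star_eigenvectorUnitary

theorem Matrix.IsHermitian.sum_eigenvalues_eq_one {M : Matrix n n ℂ} (hM : M.IsHermitian)
    (h1 : M.trace = 1) : ∑ i, hM.eigenvalues i = 1 := by
  have h := hM.trace_eq_sum_eigenvalues
  rw [h1] at h
  simpa using (congrArg Complex.re h).symm

theorem map_normSq_mem_doublyStochastic {V : Matrix n n ℂ} (hV : V ∈ unitaryGroup n ℂ) :
    V.map Complex.normSq ∈ doublyStochastic ℝ n := by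
  refine mem_doublyStochastic_iff_sum.mpr
    ⟨fun i j => Complex.normSq_nonneg _, fun i => ?_, fun j => ?_⟩
  · have h := congr_fun₂ (mem_unitaryGroup_iff.mp hV) i i
    simp only [mul_apply, star_apply, Complex.star_def, Complex.mul_conj, one_apply_eq] at h
    exact_mod_cast h
  · have h := congr_fun₂ (mem_unitaryGroup_iff'.mp hV) j j
    simp only [mul_apply, star_apply, Complex.star_def, mul_comm (starRingEnd ℂ _),
      Complex.mul_conj, one_apply_eq] at h
    exact_mod_cast h

theorem mul_diagonal_mul_star_apply_self (V : Matrix n n ℂ) (t : n → ℝ) (i : n) :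
    (V * diagonal (RCLike.ofReal ∘ t : n → ℂ) * star V) i i =
      ((V.map Complex.normSq *ᵥ t) i : ℝ) := by
  rw [mul_apply]
  simp only [mul_diagonal, star_apply, mulVec, dotProduct, map_apply, Complex.ofReal_sum,
    Complex.ofReal_mul, Complex.normSq_eq_conj_mul_self]
  refine Finset.sum_congr rfl fun j _ => ?_
  simp only [Complex.coe_algebraMap, Function.comp_apply, RCLike.star_def]
  ring

theorem vnEntropy_mul_diagonal_mul_star {V : Matrix n n ℂ} (hV : V ∈ unitaryGroup n ℂ)
    (t : n → ℝ) :
    vnEntropy (V * diagonal (RCLike.ofReal ∘ t : n → ℂ) * star V) = ∑ i, negMulLog (t i) := by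
  have hH : (V * diagonal (RCLike.ofReal ∘ t : n → ℂ) * star V).IsHermitian :=
    isHermitian_mul_mul_conjTranspose V
      (isHermitian_diagonal_iff.mpr fun i => by simp [isSelfAdjoint_iff])
  have hcharpoly : (V * diagonal (RCLike.ofReal ∘ t : n → ℂ) * star V).charpoly
      = (diagonal (RCLike.ofReal ∘ t : n → ℂ)).charpoly := by
    rw [charpoly_mul_comm, ← Matrix.mul_assoc, mem_unitaryGroup_iff'.mp hV, Matrix.one_mul]
  have hroots : Multiset.map (RCLike.ofReal ∘ hH.eigenvalues : n → ℂ) Finset.univ.val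
      = Multiset.map (RCLike.ofReal ∘ t : n → ℂ) Finset.univ.val := by
    rw [← hH.roots_charpoly_eq_eigenvalues, hcharpoly, charpoly_diagonal, Polynomial.roots_prod]
    · simp
    · simp [Finset.prod_ne_zero_iff, Polynomial.X_sub_C_ne_zero]
  rw [vnEntropy, dif_pos hH, Finset.sum_eq_multiset_sum, Finset.sum_eq_multiset_sum]
  have := congrArg (Multiset.map (negMulLog ∘ RCLike.re (K := ℂ))) hroots
  simp only [Multiset.map_map] at this
  convert congrArg Multiset.sum this using 3 <;> simp

theorem vnEntropy_mul_mul_star {W M : Matrix n n ℂ} (hW : W ∈ unitaryGroup n ℂ)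
    (hM : M.IsHermitian) : vnEntropy (W * M * star W) = vnEntropy M := by
  have hconj : W * M * star W = (W * (hM.eigenvectorUnitary : Matrix n n ℂ)) *
      diagonal (RCLike.ofReal ∘ hM.eigenvalues) *
      star (W * (hM.eigenvectorUnitary : Matrix n n ℂ)) := by
    conv_lhs => rw [hM.eq_mul_diagonal_mul_star]
    simp only [star_mul, Matrix.mul_assoc]
  rw [hconj, vnEntropy_mul_diagonal_mul_star (mul_mem hW hM.eigenvectorUnitary.2), vnEntropy,
    dif_pos hM]

end Spectral

theorem vnEntropy_kronecker {A B : Type*} [Fintype A] [Fintype B] [DecidableEq A]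
    [DecidableEq B] {ρ : Matrix A A ℂ} {σ : Matrix B B ℂ} (hρ : ρ.IsHermitian)
    (hσ : σ.IsHermitian) (hρ1 : ρ.trace = 1) (hσ1 : σ.trace = 1) :
    vnEntropy (ρ ⊗ₖ σ) = vnEntropy ρ + vnEntropy σ := by
  have hU := kronecker_mem_unitary hρ.eigenvectorUnitary.2 hσ.eigenvectorUnitary.2
  have hprod : ρ ⊗ₖ σ = ((hρ.eigenvectorUnitary : Matrix A A ℂ) ⊗ₖ hσ.eigenvectorUnitary) *
      diagonal (RCLike.ofReal ∘ fun m => hρ.eigenvalues m.1 * hσ.eigenvalues m.2) *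
      star ((hρ.eigenvectorUnitary : Matrix A A ℂ) ⊗ₖ hσ.eigenvectorUnitary) := by
    conv_lhs => rw [hρ.eq_mul_diagonal_mul_star, hσ.eq_mul_diagonal_mul_star]
    rw [mul_kronecker_mul, mul_kronecker_mul, diagonal_kronecker_diagonal, star_eq_conjTranspose,
      star_eq_conjTranspose, star_eq_conjTranspose, conjTranspose_kronecker]
    congr 3
    ext m
    simp
  rw [hprod, vnEntropy_mul_diagonal_mul_star hU, vnEntropy, dif_pos hρ, vnEntropy, dif_pos hσ,
    Fintype.sum_prod_type]
  simp only [negMulLog_mul, Finset.sum_add_distrib, ← Finset.sum_mul, ← Finset.mul_sum,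
    hρ.sum_eigenvalues_eq_one hρ1, hσ.sum_eigenvalues_eq_one hσ1, one_mul]

section PartialTrace

variable {A B : Type*} [Fintype A] [Fintype B]

theorem ptr2_kronecker_one_mul [DecidableEq B] (M : Matrix A A ℂ)
    (τ : Matrix (A × B) (A × B) ℂ) :
    ptr2 ((M ⊗ₖ (1 : Matrix B B ℂ)) * τ) = M * ptr2 τ := by
  ext a a'
  simp only [ptr2, mul_apply, kroneckerMap_apply, one_apply, mul_ite, mul_one, mul_zero, ite_mul,
    zero_mul, Fintype.sum_prod_type, Finset.sum_ite_eq, Finset.mem_univ, ↓reduceIte, Finset.mul_sum]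
  rw [Finset.sum_comm]

theorem ptr2_mul_kronecker_one [DecidableEq B] (M : Matrix A A ℂ)
    (τ : Matrix (A × B) (A × B) ℂ) :
    ptr2 (τ * (M ⊗ₖ (1 : Matrix B B ℂ))) = ptr2 τ * M := by
  ext a a'
  simp only [ptr2, mul_apply, kroneckerMap_apply, one_apply, mul_ite, mul_one, mul_zero,
    Fintype.sum_prod_type, Finset.sum_ite_eq', Finset.mem_univ, ↓reduceIte, Finset.sum_mul]
  rw [Finset.sum_comm]

theorem ptr2_one_kronecker_mul_comm [DecidableEq A] (N : Matrix B B ℂ)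
    (τ : Matrix (A × B) (A × B) ℂ) :
    ptr2 (((1 : Matrix A A ℂ) ⊗ₖ N) * τ) = ptr2 (τ * ((1 : Matrix A A ℂ) ⊗ₖ N)) := by
  ext a a'
  simp only [ptr2, mul_apply, kroneckerMap_apply, one_apply, ite_mul, one_mul, zero_mul,
    Fintype.sum_prod_type, Finset.sum_ite_irrel, Finset.sum_const_zero, Finset.sum_ite_eq,
    Finset.mem_univ, ↓reduceIte, mul_ite, mul_zero, Finset.sum_ite_eq']
  conv_rhs => rw [Finset.sum_comm]
  exact Finset.sum_congr rfl fun y _ => Finset.sum_congr rfl fun x _ => mul_comm _ _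

theorem ptr2_star_kronecker_mul_mul_kronecker [DecidableEq A] [DecidableEq B]
    (τ : Matrix (A × B) (A × B) ℂ) (P : Matrix A A ℂ) {Q : Matrix B B ℂ} (hQ : Q * star Q = 1) :
    ptr2 (star (P ⊗ₖ Q) * τ * (P ⊗ₖ Q)) = star P * ptr2 τ * P := by
  have hPQ : P ⊗ₖ Q = ((1 : Matrix A A ℂ) ⊗ₖ Q) * (P ⊗ₖ (1 : Matrix B B ℂ)) := by
    rw [← mul_kronecker_mul, Matrix.one_mul, Matrix.mul_one]
  have hstarP : star (P ⊗ₖ (1 : Matrix B B ℂ)) = star P ⊗ₖ 1 := by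
    simp [star_eq_conjTranspose, conjTranspose_kronecker]
  have hstarQ : star ((1 : Matrix A A ℂ) ⊗ₖ Q) = 1 ⊗ₖ star Q := by
    simp [star_eq_conjTranspose, conjTranspose_kronecker]
  rw [hPQ, star_mul, hstarP, hstarQ]
  simp only [← Matrix.mul_assoc]
  rw [ptr2_mul_kronecker_one]
  simp only [Matrix.mul_assoc]
  rw [ptr2_kronecker_one_mul, ptr2_one_kronecker_mul_comm, Matrix.mul_assoc τ,
    ← mul_kronecker_mul, hQ, Matrix.one_mul, one_kronecker_one, Matrix.mul_one, Matrix.mul_assoc]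

theorem ptr1_eq_ptr2_submatrix_swap (τ : Matrix (A × B) (A × B) ℂ) :
    ptr1 τ = ptr2 (τ.submatrix Prod.swap Prod.swap) := rfl

theorem submatrix_swap_star_kronecker_mul_mul_kronecker (τ : Matrix (A × B) (A × B) ℂ)
    (P : Matrix A A ℂ) (Q : Matrix B B ℂ) :
    (star (P ⊗ₖ Q) * τ * (P ⊗ₖ Q)).submatrix Prod.swap Prod.swap =
      star (Q ⊗ₖ P) * τ.submatrix Prod.swap Prod.swap * (Q ⊗ₖ P) := by
  have hswap : ∀ M : Matrix A A ℂ, ∀ N : Matrix B B ℂ,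
      (M ⊗ₖ N).submatrix Prod.swap Prod.swap = N ⊗ₖ M := fun M N => by
    ext ⟨b, a⟩ ⟨b', a'⟩
    simp [mul_comm]
  rw [← hswap, star_eq_conjTranspose, star_eq_conjTranspose, conjTranspose_submatrix]
  simp only [← Equiv.coe_prodComm, submatrix_mul_equiv]

theorem ptr1_star_kronecker_mul_mul_kronecker [DecidableEq A] [DecidableEq B]
    (τ : Matrix (A × B) (A × B) ℂ) {P : Matrix A A ℂ} (hP : P * star P = 1) (Q : Matrix B B ℂ) :
    ptr1 (star (P ⊗ₖ Q) * τ * (P ⊗ₖ Q)) = star Q * ptr1 τ * Q := by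
  rw [ptr1_eq_ptr2_submatrix_swap, submatrix_swap_star_kronecker_mul_mul_kronecker,
    ptr2_star_kronecker_mul_mul_kronecker _ _ hP, ptr1_eq_ptr2_submatrix_swap]

theorem Matrix.IsHermitian.ptr2 {τ : Matrix (A × B) (A × B) ℂ} (hτ : τ.IsHermitian) :
    (ptr2 τ).IsHermitian := by
  ext a a'
  simp only [conjTranspose_apply, _root_.ptr2, star_sum]
  exact Finset.sum_congr rfl fun b _ => congr_fun₂ hτ (a, b) (a', b)

theorem Matrix.IsHermitian.ptr1 {τ : Matrix (A × B) (A × B) ℂ} (hτ : τ.IsHermitian) :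
    (ptr1 τ).IsHermitian :=
  (hτ.submatrix Prod.swap).ptr2

end PartialTrace

theorem vnEntropy_le_vnEntropy_ptr2_add_vnEntropy_ptr1 {A B : Type*} [Fintype A] [Fintype B]
    [DecidableEq A] [DecidableEq B] {τ : Matrix (A × B) (A × B) ℂ} (hτ : τ.PosSemidef)
    (hτ1 : τ.trace = 1) : vnEntropy τ ≤ vnEntropy (ptr2 τ) + vnEntropy (ptr1 τ) := by
  have hH : τ.IsHermitian := hτ.1
  have hA := hH.ptr2
  have hB := hH.ptr1
  set PA : Matrix A A ℂ := (hA.eigenvectorUnitary : Matrix A A ℂ)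
  set PB : Matrix B B ℂ := (hB.eigenvectorUnitary : Matrix B B ℂ)
  have hP := kronecker_mem_unitary hA.eigenvectorUnitary.2 hB.eigenvectorUnitary.2
  set R := star (PA ⊗ₖ PB) * (hH.eigenvectorUnitary : Matrix (A × B) (A × B) ℂ)
  have hR : R ∈ unitaryGroup (A × B) ℂ := mul_mem (Unitary.star_mem hP) hH.eigenvectorUnitary.2
  set Q := R.map Complex.normSq *ᵥ hH.eigenvalues
  have hdiag (m : A × B) : (star (PA ⊗ₖ PB) * τ * (PA ⊗ₖ PB)) m m = (Q m : ℂ) := by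
    rw [← mul_diagonal_mul_star_apply_self]
    conv_lhs => rw [hH.eq_mul_diagonal_mul_star]
    simp only [R, star_mul, star_star, Matrix.mul_assoc]
  have hmargA (i : A) : ∑ j, Q (i, j) = hA.eigenvalues i := by
    have h := congr_fun₂ (ptr2_star_kronecker_mul_mul_kronecker τ PA (Q := PB)
      (mem_unitaryGroup_iff.mp hB.eigenvectorUnitary.2)) i i
    rw [hA.star_eigenvectorUnitary_mul_mul_eigenvectorUnitary] at h
    simp only [ptr2, hdiag] at h
    simpa using congrArg Complex.re h
  have hmargB (j : B) : ∑ i, Q (i, j) = hB.eigenvalues j := by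
    have h := congr_fun₂ (ptr1_star_kronecker_mul_mul_kronecker τ (P := PA)
      (mem_unitaryGroup_iff.mp hA.eigenvectorUnitary.2) PB) j j
    rw [hB.star_eigenvectorUnitary_mul_mul_eigenvectorUnitary] at h
    simp only [ptr1, hdiag] at h
    simpa using congrArg Complex.re h
  have hM := map_normSq_mem_doublyStochastic hR
  calc vnEntropy τ = ∑ m, negMulLog (hH.eigenvalues m) := dif_pos hH
    _ ≤ ∑ m, negMulLog (Q m) :=
      sum_negMulLog_le_sum_negMulLog_mulVec hM hτ.eigenvalues_nonneg
    _ ≤ ∑ i, negMulLog (hA.eigenvalues i) + ∑ j, negMulLog (hB.eigenvalues j) :=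
      sum_negMulLog_le_add_of_marginals
        (fun m => Finset.sum_nonneg fun k _ => mul_nonneg (Complex.normSq_nonneg _)
          (hτ.eigenvalues_nonneg k))
        ((sum_mulVec_of_mem_doublyStochastic hM).trans (hH.sum_eigenvalues_eq_one hτ1))
        hmargA hmargB
    _ = vnEntropy (ptr2 τ) + vnEntropy (ptr1 τ) := by
      rw [vnEntropy, dif_pos hA, vnEntropy, dif_pos hB]

/-- If the convolution channel agrees with its complementary channel, the
entropy of the convolution dominates the average entropy of the inputs. -/
theorem entropy_convolution_ge_average
    {A : Type*} [Fintype A] [DecidableEq A]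
    (ρ σ : Matrix A A ℂ)
    (hρ : ρ.PosSemidef) (hσ : σ.PosSemidef)
    (hρ1 : ρ.trace = 1) (hσ1 : σ.trace = 1)
    (W : Matrix (A × A) (A × A) ℂ) (hW : W ∈ Matrix.unitaryGroup (A × A) ℂ)
    (hcompl : ptr1 (W * (ρ ⊗ₖ σ) * star W) = ptr2 (W * (ρ ⊗ₖ σ) * star W)) :
    (vnEntropy ρ + vnEntropy σ) / 2 ≤ vnEntropy (ptr2 (W * (ρ ⊗ₖ σ) * star W)) := by
  have hτ : (W * (ρ ⊗ₖ σ) * star W).PosSemidef :=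
    (hρ.kronecker hσ).mul_mul_conjTranspose_same W
  have hτ1 : (W * (ρ ⊗ₖ σ) * star W).trace = 1 := by
    rw [trace_mul_cycle, mem_unitaryGroup_iff'.mp hW, Matrix.one_mul, trace_kronecker, hρ1, hσ1,
      mul_one]
  have hentropy : vnEntropy (W * (ρ ⊗ₖ σ) * star W) = vnEntropy ρ + vnEntropy σ := by
    rw [vnEntropy_mul_mul_star hW (hρ.kronecker hσ).1, vnEntropy_kronecker hρ.1 hσ.1 hρ1 hσ1]
  have hsub := vnEntropy_le_vnEntropy_ptr2_add_vnEntropy_ptr1 hτ hτ1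
  rw [hentropy, hcompl] at hsub
  linarith
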